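/- There exists $u_0 \in L^2(\mathbb{R}^d)$ such that the solution $u(t) = e^{t\Delta} u_0$ of the heat equation satisfies $\int_0^T \|u(t)\|_{\dot H^2} \, dt = \infty$ for every $T > 0$; in particular $u \notin L^1(0,T; H^2(\mathbb{R}^d))$. -/

import Mathlib

/-!
Work on the Fourier side. Put unit balls `B n` into the dyadic shells
`2 ^ (n + 1) ≤ ‖ξ‖ ≤ 2 ^ (n + 2)` and let `û₀ = 1 / log₂ ‖ξ‖` on `⋃ n, B n` and `0` elsewhere, so
that `û₀ ≍ 1 / n` on `B n` and `‖u₀‖²_{L²} ≲ ∑ 1 / n² < ∞`. For `t ≤ 4 ^ (-(n + 2))` the heat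
factor `e^{-t‖ξ‖²}` is `≥ e⁻¹` on `B n`, so the ball `B n` alone gives `‖u(t)‖_{Ḣ²} ≳ 4 ^ n / n`.
Integrating over `t ∈ (4 ^ (-(n + 3)), 4 ^ (-(n + 2))]` yields a contribution `≳ 1 / n`, and these
intervals are disjoint, so `∫₀ᵀ ‖u(t)‖_{Ḣ²} dt` dominates a tail of the harmonic series.
-/

open MeasureTheory Set Filter Topology Real

theorem sq_mul_exp_neg_mul_sq_le {x t : ℝ} (hx : 0 ≤ x) (ht : 0 < t) :
    x ^ 2 * exp (-t * x) ^ 2 ≤ 1 / (2 * t ^ 2) := by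
  have hquad : (2 * t * x) ^ 2 / 2 ≤ exp (2 * t * x) := by
    nlinarith [quadratic_le_exp_of_nonneg (by positivity : 0 ≤ 2 * t * x)]
  have hexp : exp (-t * x) ^ 2 * exp (2 * t * x) = 1 := by
    rw [← exp_nat_mul, ← exp_add]; norm_num; ring
  rw [le_div_iff₀ (by positivity)]
  nlinarith [sq_nonneg (exp (-t * x)), exp_pos (-t * x)]

theorem heatIntegrand_ge {a r t u x : ℝ} (ha : 0 ≤ a) (ht : 0 ≤ t) (htr : t * r ^ 2 ≤ 1)
    (hau : a ≤ u) (hrx : r / 2 ≤ x) (hxr : x ≤ r) :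
    ((r / 2) ^ 2 * (a * exp (-1))) ^ 2 ≤ x ^ 4 * (u * exp (-t * x ^ 2)) ^ 2 := by
  have hr : 0 ≤ r / 2 := by linarith
  have hexp : exp (-1) ≤ exp (-t * x ^ 2) := by
    rw [exp_le_exp, neg_mul, neg_le_neg_iff]
    calc t * x ^ 2 ≤ t * r ^ 2 := by gcongr; linarith
      _ ≤ 1 := htr
  rw [show x ^ 4 * (u * exp (-t * x ^ 2)) ^ 2 = (x ^ 2 * (u * exp (-t * x ^ 2))) ^ 2 by ring]
  have hu : 0 ≤ u := ha.trans hau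
  gcongr

theorem inv_logb_two_mem_Icc {x : ℝ} {n : ℕ} (hx : x ∈ Icc ((2 : ℝ) ^ (n + 1)) (2 ^ (n + 2))) :
    (logb 2 x)⁻¹ ∈ Icc ((n + 2 : ℝ)⁻¹) ((n + 1 : ℝ)⁻¹) := by
  have hlogb (k : ℕ) : logb 2 ((2 : ℝ) ^ k) = k := by
    rw [logb_pow, logb_self_eq_one one_lt_two, mul_one]
  have hlo : (n + 1 : ℝ) ≤ logb 2 x := by
    simpa [hlogb] using logb_le_logb_of_le (b := 2) one_lt_two (by positivity) hx.1
  have hhi : logb 2 x ≤ n + 2 := by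
    simpa [hlogb] using logb_le_logb_of_le (b := 2) one_lt_two
      (lt_of_lt_of_le (pow_pos two_pos _) hx.1) hx.2
  exact ⟨inv_anti₀ ((by positivity : (0 : ℝ) < n + 1).trans_le hlo) hhi,
    inv_anti₀ (by positivity) hlo⟩

theorem tsum_ofReal_eq_top_of_not_summable {b : ℕ → ℝ} (hb0 : ∀ n, 0 ≤ b n)
    (hb : ¬ Summable b) : ∑' n, ENNReal.ofReal (b n) = ⊤ := by
  by_contra h
  exact hb ((ENNReal.summable_toReal h).congr fun n => ENNReal.toReal_ofReal (hb0 n))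

theorem lintegral_Ioc_zero_eq_top_of_antitone {f : ℝ → ENNReal} {τ : ℕ → ℝ} (hτ : Antitone τ)
    (hτ0 : Tendsto τ atTop (𝓝 0)) {b : ℕ → ℝ} (hb0 : ∀ n, 0 ≤ b n) (hb : ¬ Summable b)
    (hfb : ∀ n, ENNReal.ofReal (b n) ≤ ∫⁻ t in Ioc (τ (n + 1)) (τ n), f t) {T : ℝ}
    (hT : 0 < T) : ∫⁻ t in Ioc 0 T, f t = ⊤ := by
  obtain ⟨N, hN⟩ := (hτ0.eventually (gt_mem_nhds hT)).exists
  set σ : ℕ → ℝ := fun n => τ (n + N)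
  have hσ : Antitone σ := hτ.comp_monotone fun m n h => Nat.add_le_add_right h N
  have hsub : ⋃ n, Ioc (σ (n + 1)) (σ n) ⊆ Ioc 0 T := by
    refine iUnion_subset fun n t ht => ⟨(hτ.le_of_tendsto hτ0 _).trans_lt ht.1, ?_⟩
    exact ht.2.trans ((hτ (Nat.le_add_left N n)).trans hN.le)
  refine eq_top_iff.2 ?_
  calc ⊤ = ∑' n, ENNReal.ofReal (b (n + N)) :=
        (tsum_ofReal_eq_top_of_not_summable (fun n => hb0 _)
          ((summable_nat_add_iff N).not.2 hb)).symm
    _ ≤ ∑' n, ∫⁻ t in Ioc (σ (n + 1)) (σ n), f t :=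
        ENNReal.tsum_le_tsum fun n => by simpa only [σ, add_right_comm] using hfb (n + N)
    _ = ∫⁻ t in ⋃ n, Ioc (σ (n + 1)) (σ n), f t :=
        (lintegral_iUnion (fun _ => measurableSet_Ioc) hσ.pairwise_disjoint_on_Ioc_succ _).symm
    _ ≤ ∫⁻ t in Ioc 0 T, f t := lintegral_mono_set hsub

section HeatFlow

variable {E : Type*} [NormedAddCommGroup E] [MeasurableSpace E]

/-- `‖e^{tΔ} u₀‖²_{Ḣ²}` by Plancherel, where `u₀` stands for the Fourier transform of the initial
datum, so that `e^{tΔ}` acts by multiplication with `exp (-t * ‖ξ‖ ^ 2)`. -/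
noncomputable def heatH2NormSq (μ : Measure E) (u₀ : E → ℝ) (t : ℝ) : ℝ :=
  ∫ ξ, ‖ξ‖ ^ 4 * (u₀ ξ * exp (-t * ‖ξ‖ ^ 2)) ^ 2 ∂μ

theorem integrable_heatIntegrand [OpensMeasurableSpace E] {μ : Measure E} {u₀ : E → ℝ}
    (hu₀ : Integrable (fun ξ => u₀ ξ ^ 2) μ) {t : ℝ} (ht : 0 < t) :
    Integrable (fun ξ => ‖ξ‖ ^ 4 * (u₀ ξ * exp (-t * ‖ξ‖ ^ 2)) ^ 2) μ := by
  have hweight : AEStronglyMeasurable (fun ξ : E => ‖ξ‖ ^ 4 * exp (-t * ‖ξ‖ ^ 2) ^ 2) μ := by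
    fun_prop
  refine (hu₀.bdd_mul hweight (c := 1 / (2 * t ^ 2)) (ae_of_all _ fun ξ => ?_)).congr
    (ae_of_all _ fun ξ => by ring)
  rw [Real.norm_of_nonneg (by positivity), show ‖ξ‖ ^ 4 = (‖ξ‖ ^ 2) ^ 2 by ring]
  exact sq_mul_exp_neg_mul_sq_le (by positivity) ht

theorem sqrt_heatH2NormSq_ge [OpensMeasurableSpace E] {μ : Measure E} {u₀ : E → ℝ}
    (hu₀ : Integrable (fun ξ => u₀ ξ ^ 2) μ) {S : Set E} (hS : MeasurableSet S) (hμS : μ S ≠ ⊤)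
    {a r t : ℝ} (ha : 0 ≤ a) (ht : 0 < t) (htr : t * r ^ 2 ≤ 1)
    (hSu : ∀ ξ ∈ S, a ≤ u₀ ξ ∧ r / 2 ≤ ‖ξ‖ ∧ ‖ξ‖ ≤ r) :
    (r / 2) ^ 2 * (a * exp (-1)) * √(μ.real S) ≤ √(heatH2NormSq μ u₀ t) := by
  have hint := integrable_heatIntegrand hu₀ ht
  have hS_le : ((r / 2) ^ 2 * (a * exp (-1))) ^ 2 * μ.real S ≤ heatH2NormSq μ u₀ t :=
    (setIntegral_ge_of_const_le_real hS hμS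
      (fun ξ hξ => heatIntegrand_ge ha ht.le htr (hSu ξ hξ).1 (hSu ξ hξ).2.1 (hSu ξ hξ).2.2)
      hint.integrableOn).trans
    (setIntegral_le_integral hint (ae_of_all _ fun ξ => by positivity))
  calc (r / 2) ^ 2 * (a * exp (-1)) * √(μ.real S)
      = √(((r / 2) ^ 2 * (a * exp (-1))) ^ 2 * μ.real S) := by
        rw [sqrt_mul (sq_nonneg _), sqrt_sq (by positivity)]
    _ ≤ √(heatH2NormSq μ u₀ t) := sqrt_le_sqrt hS_le

noncomputable def logProfile (U : Set E) : E → ℝ := U.indicator fun ξ => (logb 2 ‖ξ‖)⁻¹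

variable [OpensMeasurableSpace E] {μ : Measure E} {B : ℕ → Set E} {V : ENNReal}

theorem integrable_sq_logProfile (hBm : ∀ n, MeasurableSet (B n)) (hBV : ∀ n, μ (B n) = V)
    (hB : ∀ n, ∀ ξ ∈ B n, ‖ξ‖ ∈ Icc ((2 : ℝ) ^ (n + 1)) (2 ^ (n + 2))) (hV : V ≠ ⊤) :
    Integrable (fun ξ => logProfile (⋃ n, B n) ξ ^ 2) μ := by
  have hmeas : Measurable fun ξ : E => (logb 2 ‖ξ‖)⁻¹ ^ 2 := by
    unfold logb; fun_prop
  have hbound (n : ℕ) : ∀ ξ ∈ B n, ‖(logb 2 ‖ξ‖)⁻¹ ^ 2‖ ≤ (n + 1 : ℝ)⁻¹ ^ 2 := fun ξ hξ => by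
    have h := inv_logb_two_mem_Icc (hB n ξ hξ)
    rw [norm_pow, Real.norm_of_nonneg ((by positivity : (0 : ℝ) ≤ _).trans h.1)]
    exact pow_le_pow_left₀ ((by positivity : (0 : ℝ) ≤ _).trans h.1) h.2 2
  have hsum : Summable fun n : ℕ => (n + 1 : ℝ)⁻¹ ^ 2 * V.toReal := by
    refine Summable.mul_right _ ?_
    have := (summable_nat_add_iff 1).2 (summable_nat_pow_inv.2 one_lt_two : Summable
      fun n : ℕ => ((n : ℝ) ^ 2)⁻¹)
    simpa [inv_pow] using this
  have hU : IntegrableOn (fun ξ => (logb 2 ‖ξ‖)⁻¹ ^ 2) (⋃ n, B n) μ := by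
    refine integrableOn_iUnion_of_summable_integral_norm (fun n => ?_) ?_
    · exact Measure.integrableOn_of_bounded (hBV n ▸ hV) hmeas.aestronglyMeasurable
        (ae_restrict_of_forall_mem (hBm n) (hbound n))
    · refine hsum.of_nonneg_of_le (fun n => integral_nonneg fun _ => norm_nonneg _) fun n => ?_
      have := norm_setIntegral_le_of_norm_le_const (μ := μ) (hBV n ▸ hV.lt_top)
        fun ξ hξ => (norm_norm ((logb 2 ‖ξ‖)⁻¹ ^ 2)).trans_le (hbound n ξ hξ)
      rwa [Real.norm_of_nonneg (integral_nonneg fun _ => norm_nonneg _), measureReal_def,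
        hBV n] at this
  have hsq : (fun ξ => logProfile (⋃ n, B n) ξ ^ 2) =
      (⋃ n, B n).indicator fun ξ => (logb 2 ‖ξ‖)⁻¹ ^ 2 :=
    (indicator_comp_of_zero (g := fun y : ℝ => y ^ 2) (zero_pow two_ne_zero)).symm
  rw [hsq]
  exact (integrable_indicator_iff (MeasurableSet.iUnion hBm)).2 hU

theorem lintegral_Ioc_sqrt_heatH2NormSq_logProfile_ge (hBm : ∀ n, MeasurableSet (B n))
    (hBV : ∀ n, μ (B n) = V) (hB : ∀ n, ∀ ξ ∈ B n, ‖ξ‖ ∈ Icc ((2 : ℝ) ^ (n + 1)) (2 ^ (n + 2)))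
    (hV : V ≠ ⊤) (n : ℕ) :
    ENNReal.ofReal (3 / 16 * exp (-1) * √V.toReal * (n + 2 : ℝ)⁻¹) ≤
      ∫⁻ t in Ioc (((2 : ℝ) ^ (n + 3)) ^ 2)⁻¹ (((2 : ℝ) ^ (n + 2)) ^ 2)⁻¹,
        ENNReal.ofReal √(heatH2NormSq μ (logProfile (⋃ n, B n)) t) := by
  set r : ℝ := 2 ^ (n + 2) with hr
  set c : ℝ := (r / 2) ^ 2 * ((n + 2 : ℝ)⁻¹ * exp (-1)) * √V.toReal with hc
  have hlow : ∀ t ∈ Ioc (((2 : ℝ) ^ (n + 3)) ^ 2)⁻¹ (r ^ 2)⁻¹,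
      c ≤ √(heatH2NormSq μ (logProfile (⋃ n, B n)) t) := by
    intro t ht
    have ht0 : 0 < t := lt_trans (by positivity) ht.1
    have htr : t * r ^ 2 ≤ 1 := by
      calc t * r ^ 2 ≤ (r ^ 2)⁻¹ * r ^ 2 := by gcongr; exact ht.2
        _ = 1 := inv_mul_cancel₀ (by positivity)
    have hr2 : r / 2 = 2 ^ (n + 1) := by rw [hr]; ring
    have hμB : μ.real (B n) = V.toReal := by rw [measureReal_def, hBV n]
    rw [hc, ← hμB]
    refine sqrt_heatH2NormSq_ge (integrable_sq_logProfile hBm hBV hB hV) (hBm n) (hBV n ▸ hV)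
      (by positivity) ht0 htr fun ξ hξ => ?_
    unfold logProfile
    rw [indicator_of_mem (mem_iUnion_of_mem n hξ), hr2]
    exact ⟨(inv_logb_two_mem_Icc (hB n ξ hξ)).1, (hB n ξ hξ).1, (hB n ξ hξ).2⟩
  calc ENNReal.ofReal (3 / 16 * exp (-1) * √V.toReal * (n + 2 : ℝ)⁻¹)
      = ENNReal.ofReal c * volume (Ioc (((2 : ℝ) ^ (n + 3)) ^ 2)⁻¹ (r ^ 2)⁻¹) := by
        rw [Real.volume_Ioc, ← ENNReal.ofReal_mul (by positivity)]
        congr 1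
        rw [hc, hr]
        field_simp
        ring
    _ = ∫⁻ _ in Ioc (((2 : ℝ) ^ (n + 3)) ^ 2)⁻¹ (r ^ 2)⁻¹, ENNReal.ofReal c :=
        (setLIntegral_const _ _).symm
    _ ≤ _ := setLIntegral_mono' measurableSet_Ioc fun t ht => ENNReal.ofReal_le_ofReal (hlow t ht)

theorem lintegral_sqrt_heatH2NormSq_logProfile_eq_top (hBm : ∀ n, MeasurableSet (B n))
    (hBV : ∀ n, μ (B n) = V) (hB : ∀ n, ∀ ξ ∈ B n, ‖ξ‖ ∈ Icc ((2 : ℝ) ^ (n + 1)) (2 ^ (n + 2)))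
    (hV0 : V ≠ 0) (hV : V ≠ ⊤) {T : ℝ} (hT : 0 < T) :
    ∫⁻ t in Ioc 0 T, ENNReal.ofReal √(heatH2NormSq μ (logProfile (⋃ n, B n)) t) = ⊤ := by
  have hc : 0 < 3 / 16 * exp (-1) * √V.toReal := by
    have := sqrt_pos.2 (ENNReal.toReal_pos hV0 hV)
    positivity
  have hharmonic : ¬ Summable fun n : ℕ => (n + 2 : ℝ)⁻¹ := by
    exact_mod_cast (summable_nat_add_iff 2).not.2 Real.not_summable_natCast_inv
  exact lintegral_Ioc_zero_eq_top_of_antitone (τ := fun n => ((2 ^ (n + 2) : ℝ) ^ 2)⁻¹)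
    (fun m n h => inv_anti₀ (by positivity)
      (pow_le_pow_left₀ (by positivity) (pow_le_pow_right₀ one_le_two (by omega)) 2))
    (tendsto_inv_atTop_zero.comp ((tendsto_pow_atTop two_ne_zero).comp
      ((tendsto_pow_atTop_atTop_of_one_lt one_lt_two).comp (tendsto_add_atTop_nat 2))))
    (fun n => by positivity) ((summable_mul_left_iff hc.ne').not.2 hharmonic)
    (lintegral_Ioc_sqrt_heatH2NormSq_logProfile_ge hBm hBV hB hV) hT

end HeatFlow

theorem norm_mem_Icc_of_mem_ball {E : Type*} [NormedAddCommGroup E] [NormedSpace ℝ E] {e ξ : E}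
    (he : ‖e‖ = 1) {n : ℕ} (hξ : ξ ∈ Metric.ball ((3 * 2 ^ n : ℝ) • e) 1) :
    ‖ξ‖ ∈ Icc ((2 : ℝ) ^ (n + 1)) (2 ^ (n + 2)) := by
  have hc : ‖(3 * 2 ^ n : ℝ) • e‖ = 3 * 2 ^ n := by
    rw [norm_smul, he, mul_one, Real.norm_of_nonneg (by positivity)]
  have h := abs_le.1 ((abs_norm_sub_norm_le ξ _).trans (mem_ball_iff_norm.1 hξ).le)
  rw [hc] at h
  have h1 : (1 : ℝ) ≤ 2 ^ n := one_le_pow₀ one_le_two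
  have h2 : (2 : ℝ) ^ (n + 1) = 2 * 2 ^ n := by ring
  have h4 : (2 : ℝ) ^ (n + 2) = 4 * 2 ^ n := by ring
  constructor <;> linarith

theorem exists_integrable_sq_lintegral_sqrt_heatH2NormSq_eq_top {E : Type*}
    [NormedAddCommGroup E] [NormedSpace ℝ E] [Nontrivial E] [FiniteDimensional ℝ E]
    [MeasurableSpace E] [BorelSpace E] (μ : Measure E) [μ.IsAddHaarMeasure] :
    ∃ u₀ : E → ℝ, Integrable (fun ξ => u₀ ξ ^ 2) μ ∧
      ∀ T : ℝ, 0 < T → ∫⁻ t in Ioc 0 T, ENNReal.ofReal √(heatH2NormSq μ u₀ t) = ⊤ := by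
  obtain ⟨e, he⟩ := exists_norm_eq E zero_le_one
  set B : ℕ → Set E := fun n => Metric.ball ((3 * 2 ^ n : ℝ) • e) 1
  have hBm (n : ℕ) : MeasurableSet (B n) := measurableSet_ball
  have hBV (n : ℕ) : μ (B n) = μ (Metric.ball 0 1) := μ.addHaar_ball_center _ _
  have hB (n : ℕ) : ∀ ξ ∈ B n, ‖ξ‖ ∈ Icc ((2 : ℝ) ^ (n + 1)) (2 ^ (n + 2)) :=
    fun _ hξ => norm_mem_Icc_of_mem_ball he hξ
  have hV0 : μ (Metric.ball 0 1) ≠ 0 := (Metric.measure_ball_pos μ 0 one_pos).ne'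
  have hV : μ (Metric.ball (0 : E) 1) ≠ ⊤ := measure_ball_lt_top.ne
  exact ⟨_, integrable_sq_logProfile hBm hBV hB hV,
    fun _ hT => lintegral_sqrt_heatH2NormSq_logProfile_eq_top hBm hBV hB hV0 hV hT⟩

/-- There is `u₀ ∈ L²(ℝ^d)` (given here by its Fourier transform) such that the heat flow
`û(t,ξ) = û₀(ξ) e^{-t‖ξ‖²}` satisfies `∫_0^T ‖u(t)‖_{Ḣ²} dt = ∞` for every `T > 0`. -/
theorem stmt_6 (d : ℕ) (hd : 1 ≤ d) :
    ∃ u₀ : EuclideanSpace ℝ (Fin d) → ℝ,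
      Integrable (fun ξ => (u₀ ξ) ^ 2) ∧
      ∀ T : ℝ, 0 < T →
        (∫⁻ t in Ioc (0 : ℝ) T, ENNReal.ofReal
          (Real.sqrt (∫ ξ : EuclideanSpace ℝ (Fin d),
            ‖ξ‖ ^ 4 * (u₀ ξ * Real.exp (-t * ‖ξ‖ ^ 2)) ^ 2))) = ⊤ := by
  have : Nonempty (Fin d) := ⟨⟨0, hd⟩⟩
  exact exists_integrable_sq_lintegral_sqrt_heatH2NormSq_eq_top volume
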